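/- Let A = ℂ[ψ_j^{(n)}] with derivation D as above, and for finitely supported u ∈ A^J let ∂_u = Σ_{j,n} Dⁿ(u_j) ∂/∂ψ_j^{(n)}. Then the bracket [u, v] := ∂_u(v) − ∂_v(u) (applied componentwise) satisfies ∂_{[u,v]} = [∂_u, ∂_v] as derivations of A; in particular this bracket satisfies the Jacobi identity and makes A^J into a Lie algebra. -/

import Mathlib

/-
The chain rule identifies `∂_u` with the derivation of `A` sending `ψ_j^{(n)}` to `Dⁿ u_j`
(the finite sum only involves the variables of its argument). This derivation commutes with `D`,
since both `∂_u ∘ D` and `D ∘ ∂_u` send `ψ_j^{(n)}` to `Dⁿ⁺¹ u_j`. Hence the commutator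
`[∂_u, ∂_v]` is a derivation sending `ψ_j^{(n)}` to `Dⁿ(∂_u v_j - ∂_v u_j) = Dⁿ [u,v]_j`, so it is
`∂_{[u,v]}`; antisymmetry is immediate and the Jacobi identity follows by expanding.
-/

namespace EvolutionaryDerivations

open MvPolynomial

/-- The polynomial algebra `A = ℂ[ψ_j^{(n)}]` in commuting formal variables. -/
abbrev FormalAlg (J : Type) := MvPolynomial (J × ℕ) ℂ

/-- The derivation `D` with `D(ψ_j^{(n)}) = ψ_j^{(n+1)}`. -/
noncomputable def Dop (J : Type) : Derivation ℂ (FormalAlg J) (FormalAlg J) :=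
  mkDerivation ℂ (fun p => X (p.1, p.2 + 1))

/-- The evolutionary derivation `∂_u = Σ_{j,n} Dⁿ(u_j) ∂/∂ψ_j^{(n)}` attached to
a finitely supported family `u = (u_j)`. -/
noncomputable def evol (J : Type) (u : J → FormalAlg J) (f : FormalAlg J) : FormalAlg J :=
  ∑ᶠ (j : J) (n : ℕ), (⇑(Dop J))^[n] (u j) * pderiv (j, n) f

/-- The bracket `[u,v] = ∂_u(v) − ∂_v(u)` (componentwise). -/
noncomputable def br (J : Type) (u v : J → FormalAlg J) : J → FormalAlg J :=
  fun j => evol J u (v j) - evol J v (u j)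

end EvolutionaryDerivations

theorem Derivation.finset_sum_apply {R A M ι : Type*} [CommSemiring R] [CommSemiring A]
    [Algebra R A] [AddCommMonoid M] [Module A M] [Module R M] (s : Finset ι)
    (D : ι → Derivation R A M) (a : A) : (∑ i ∈ s, D i) a = ∑ i ∈ s, D i a := by
  rw [← coeFnAddMonoidHom_apply, map_sum, Finset.sum_apply]
  rfl

namespace MvPolynomial

variable {R σ M : Type*} [CommSemiring R] [AddCommMonoid M] [Module R M]
  [Module (MvPolynomial σ R) M] [IsScalarTower R (MvPolynomial σ R) M]

theorem derivation_apply_eq_sum_vars (d : Derivation R (MvPolynomial σ R) M)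
    (f : MvPolynomial σ R) : d f = ∑ i ∈ f.vars, pderiv i f • d (X i) := by
  classical
  let d' : Derivation R (MvPolynomial σ R) M :=
    ∑ i ∈ f.vars, (LinearMap.toSpanSingleton (MvPolynomial σ R) M (d (X i))).compDer (pderiv i)
  calc d f = d' f := derivation_eq_of_forall_mem_vars fun i hi => by
        simp [d', Derivation.finset_sum_apply, pderiv_X, Pi.single_apply, hi]
    _ = _ := by simp [d', Derivation.finset_sum_apply]

end MvPolynomial

namespace EvolutionaryDerivations

open MvPolynomial

variable {J : Type}

noncomputable def evolDerivation (J : Type) (u : J → FormalAlg J) :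
    Derivation ℂ (FormalAlg J) (FormalAlg J) :=
  mkDerivation ℂ fun p => (⇑(Dop J))^[p.2] (u p.1)

theorem evolDerivation_X (u : J → FormalAlg J) (p : J × ℕ) :
    evolDerivation J u (X p) = (⇑(Dop J))^[p.2] (u p.1) :=
  mkDerivation_X _ _ _

theorem Dop_X (p : J × ℕ) : Dop J (X p) = X (p.1, p.2 + 1) :=
  mkDerivation_X _ _ _

theorem evol_eq_sum_vars (u : J → FormalAlg J) (f : FormalAlg J) :
    evol J u f = ∑ p ∈ f.vars, (⇑(Dop J))^[p.2] (u p.1) * pderiv p f := by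
  have hsupp : (Function.support fun p : J × ℕ => (⇑(Dop J))^[p.2] (u p.1) * pderiv p f) ⊆
      f.vars := fun p hp => by
    by_contra hp'
    exact hp (by simp only [pderiv_eq_zero_of_notMem_vars hp', mul_zero])
  rw [evol, ← finsum_curry _ (f.vars.finite_toSet.subset hsupp),
    finsum_eq_sum_of_support_subset _ hsupp]

theorem evol_eq_evolDerivation (u : J → FormalAlg J) (f : FormalAlg J) :
    evol J u f = evolDerivation J u f := by
  simp only [evol_eq_sum_vars, derivation_apply_eq_sum_vars (evolDerivation J u) f,
    evolDerivation_X, smul_eq_mul, mul_comm]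

theorem evolDerivation_commute_Dop (u : J → FormalAlg J) :
    Function.Commute (evolDerivation J u) (Dop J) := by
  have hcomm : ⁅evolDerivation J u, Dop J⁆ = 0 := derivation_ext fun p => by
    rw [Derivation.commutator_apply, Dop_X, evolDerivation_X, evolDerivation_X,
      Function.iterate_succ_apply', sub_self, Derivation.zero_apply]
  intro f
  rw [← sub_eq_zero, ← Derivation.commutator_apply, hcomm, Derivation.zero_apply]

theorem br_apply (u v : J → FormalAlg J) (j : J) :
    br J u v j = evolDerivation J u (v j) - evolDerivation J v (u j) := by
  rw [br, evol_eq_evolDerivation, evol_eq_evolDerivation]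

theorem evolDerivation_br (u v : J → FormalAlg J) :
    evolDerivation J (br J u v) = ⁅evolDerivation J u, evolDerivation J v⁆ :=
  derivation_ext fun p => by
    rw [Derivation.commutator_apply, evolDerivation_X, evolDerivation_X, evolDerivation_X,
      br_apply, iterate_map_sub, ((evolDerivation_commute_Dop u).iterate_right p.2).eq,
      ((evolDerivation_commute_Dop v).iterate_right p.2).eq]

/-- The bracket `[u,v] := ∂_u(v) − ∂_v(u)` satisfies `∂_{[u,v]} = [∂_u, ∂_v]`;
in particular it satisfies the Jacobi identity and makes the space of finitely
supported families into a Lie algebra. -/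
theorem evolutionary_bracket (J : Type) :
    (∀ u v : J → FormalAlg J,
      (Function.support u).Finite → (Function.support v).Finite →
      ∀ f : FormalAlg J,
        evol J (br J u v) f = evol J u (evol J v f) - evol J v (evol J u f)) ∧
    (∀ u v : J → FormalAlg J,
      (Function.support u).Finite → (Function.support v).Finite →
      br J u v = -br J v u) ∧
    (∀ u v w : J → FormalAlg J,
      (Function.support u).Finite → (Function.support v).Finite →
      (Function.support w).Finite →
      br J (br J u v) w + br J (br J v w) u + br J (br J w u) v = 0) := by
  refine ⟨fun u v _ _ f => ?_, fun u v _ _ => ?_, fun u v w _ _ _ => ?_⟩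
  · simp only [evol_eq_evolDerivation, evolDerivation_br, Derivation.commutator_apply]
  · exact funext fun j => (neg_sub _ _).symm
  · funext j
    simp only [Pi.add_apply, Pi.zero_apply, br_apply, evolDerivation_br,
      Derivation.commutator_apply, map_sub]
    abel

end EvolutionaryDerivations
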